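/- Let n ≥ 1 and let f : F₂ⁿ → F₂ have the form f(c_0,…,c_{n-1}) = c_0 + h(c_1,…,c_{n-1}) for some h : F₂^{n-1} → F₂ (a nonsingular feedback, so σ_f is a bijection). Let C be an orbit of σ_f whose cycle representative v (its lexicographically least state) is nonzero. Then the companion state ṽ = (v_0,…,v_{n-2}, v_{n-1}+1) lies in an orbit C′ ≠ C whose cycle representative is lexicographically smaller than v. -/
import Mathlib


attribute [local instance] Classical.propDecidable

abbrev F2 := ZMod 2

/-- Coordinate access with default value `0` outside the range. -/
noncomputable def get {n : ℕ} (c : Fin n → F2) (j : ℕ) : F2 :=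
  if h : j < n then c ⟨j, h⟩ else 0

/-- Lexicographic order on binary tuples (coordinates compared from index 0, with 0 < 1). -/
def lexLe {m : ℕ} (v w : Fin m → F2) : Prop :=
  ∀ j : Fin m, (∀ i : Fin m, i < j → v i = w i) → (v j).val ≤ (w j).val

def lexLt {m : ℕ} (v w : Fin m → F2) : Prop := lexLe v w ∧ v ≠ w

/-- Left cyclic rotation by `r`. -/
def rot {m : ℕ} (r : ℕ) (w : Fin m → F2) : Fin m → F2 :=
  fun i => w ⟨((i : ℕ) + r) % m, Nat.mod_lt _ i.pos⟩

/-- `w` is lexicographically minimal among its cyclic rotations. -/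
def IsNecklace {m : ℕ} (w : Fin m → F2) : Prop := ∀ r : ℕ, lexLe w (rot r w)

/-- `w` followed by its coordinatewise complement. -/
def complAppend {m : ℕ} (w : Fin m → F2) : Fin (2 * m) → F2 :=
  fun i => if h : (i : ℕ) < m then w ⟨(i : ℕ), h⟩
           else w ⟨(i : ℕ) - m, by have := i.isLt; omega⟩ + 1

def IsCoNecklace {m : ℕ} (w : Fin m → F2) : Prop := IsNecklace (complAppend w)

/-- The last `n-1` coordinates of an `n`-stage state. -/
def stTail {n : ℕ} (c : Fin n → F2) : Fin (n - 1) → F2 :=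
  fun i => c ⟨(i : ℕ) + 1, by have := i.isLt; omega⟩

/-- The state map of a successor rule/feedback function:
`(c_0,…,c_{n-1}) ↦ (c_1,…,c_{n-1}, ρ(c))`. -/
def nextMap {n : ℕ} (ρ : (Fin n → F2) → F2) (c : Fin n → F2) : Fin n → F2 :=
  fun i => if h : (i : ℕ) + 1 < n then c ⟨(i : ℕ) + 1, h⟩ else ρ c

/-- Feedback of the pure run-length register: `c_0 + c_1 + c_{n-1}`. -/
noncomputable def fPRR {n : ℕ} (c : Fin n → F2) : F2 :=
  get c 0 + get c 1 + get c (n - 1)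

/-- The successor rule `ρ` generates a de Bruijn sequence of order `n`,
i.e. all `2^n` states lie in a single orbit of its state map. -/
def generatesDB {n : ℕ} (ρ : (Fin n → F2) → F2) : Prop :=
  ∀ x y : Fin n → F2, ∃ k : ℕ, (nextMap ρ)^[k] x = y

def inOrbit {α : Type*} (σ : α → α) (v w : α) : Prop := ∃ k : ℕ, σ^[k] v = w

def orbit {α : Type*} (σ : α → α) (v : α) : Set α := {w | inOrbit σ v w}

/-- `v` is the cycle representative (the lexicographically least state) of its orbit. -/
def isCycleRep {m : ℕ} (σ : (Fin m → F2) → (Fin m → F2)) (v : Fin m → F2) : Prop :=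
  ∀ w ∈ orbit σ v, lexLe v w

/-- Hamming weight. -/
noncomputable def wt {m : ℕ} (u : Fin m → F2) : ℕ :=
  (Finset.univ.filter (fun j : Fin m => u j = 1)).card

/-- The operator `Λ`: cyclically shift a nonzero tuple so that its first `1`
moves to the end (identity on the zero tuple). -/
noncomputable def Lam {m : ℕ} (u : Fin m → F2) : Fin m → F2 :=
  if h : (Finset.univ.filter (fun j : Fin m => u j = 1)).Nonempty then
    rot (((Finset.univ.filter (fun j : Fin m => u j = 1)).min' h).val + 1) u
  else u

/-- The operator `Θ`: if `j ≥ 1` is the least index (0-based) with `u j = 0`,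
rotate left by `j`; fixes tuples with no such index. -/
noncomputable def Theta {m : ℕ} (u : Fin m → F2) : Fin m → F2 :=
  if h : (Finset.univ.filter (fun j : Fin m => 0 < (j : ℕ) ∧ u j = 0)).Nonempty then
    rot ((Finset.univ.filter (fun j : Fin m => 0 < (j : ℕ) ∧ u j = 0)).min' h).val u
  else u

/-- Conjugate state: first bit complemented. -/
def conjSt {n : ℕ} (v : Fin n → F2) : Fin n → F2 :=
  fun i => if (i : ℕ) = 0 then v i + 1 else v i

/-- Companion state: last bit complemented. -/
def compSt {n : ℕ} (v : Fin n → F2) : Fin n → F2 :=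
  fun i => if (i : ℕ) + 1 = n then v i + 1 else v i

/-- `(c_1,…,c_{n-1}, b)`. -/
def shiftIn {n : ℕ} (c : Fin n → F2) (b : F2) : Fin n → F2 :=
  fun i => if h : (i : ℕ) + 1 < n then c ⟨(i : ℕ) + 1, h⟩ else b

/-- `lcm(1,2,…,m)`. -/
def lcmUpTo (m : ℕ) : ℕ := (Finset.Icc 1 m).lcm id

/-- Admissible parameters `1 = k_1 < k_2 < … < k_t = n`, `k_{t-1} < n-1`, `2 ≤ t ≤ n-1`,
for the rules `Ψ₁` and `Υ₁` (the values `k 1, …, k t` of `k : ℕ → ℕ`). -/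
def validParams (n t : ℕ) (k : ℕ → ℕ) : Prop :=
  2 ≤ t ∧ t ≤ n - 1 ∧ k 1 = 1 ∧ k t = n ∧
  (∀ i : ℕ, 1 ≤ i → i < t → k i < k (i + 1)) ∧ k (t - 1) < n - 1

/-- The successor rule `Ψ₁` of Theorem 3.2. -/
noncomputable def Psi1Rule {n : ℕ} (t : ℕ) (k : ℕ → ℕ) (c : Fin n → F2) : F2 :=
  if (get c 1 = 0 ∧ IsCoNecklace (stTail c)) ∨
     (get c 1 = 1 ∧ ∃ i : ℕ, 1 ≤ i ∧ i < t ∧ k i ≤ wt (stTail c) ∧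
        wt (stTail c) < k (i + 1) ∧ IsNecklace (Lam^[k i] (stTail c)))
  then fPRR c + 1 else fPRR c

/-- The successor rule `Ψ₂` of Theorem 3.4. -/
noncomputable def Psi2Rule {n : ℕ} (k : ℕ) (c : Fin n → F2) : F2 :=
  if (get c 1 = 0 ∧ IsCoNecklace (stTail c)) ∨
     (get c 1 = 1 ∧ IsNecklace (Lam^[k] (stTail c)))
  then fPRR c + 1 else fPRR c

/-- `y_c = (c̄_1,…,c̄_{n-2}, 0) ∈ F₂^{n-1}`. -/
noncomputable def yState {n : ℕ} (c : Fin n → F2) : Fin (n - 1) → F2 :=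
  fun i => if (i : ℕ) < n - 2 then get c ((i : ℕ) + 1) + 1 else 0

/-- `w_c = (0, c_1,…,c_{n-2}) ∈ F₂^{n-1}`. -/
noncomputable def wState {n : ℕ} (c : Fin n → F2) : Fin (n - 1) → F2 :=
  fun i => if (i : ℕ) = 0 then 0 else get c (i : ℕ)

/-- The successor rule `Υ₁` of Theorem 4.2. -/
noncomputable def Ups1Rule {n : ℕ} (t : ℕ) (k : ℕ → ℕ) (c : Fin n → F2) : F2 :=
  if (get c (n - 1) = 1 ∧ IsCoNecklace (yState c)) ∨
     (get c (n - 1) = 0 ∧ ∃ i : ℕ, 1 ≤ i ∧ i < t ∧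
        k i ≤ wt (fun j => wState c j + 1) ∧ wt (fun j => wState c j + 1) < k (i + 1) ∧
        IsNecklace (Theta^[k i - 1] (wState c)))
  then fPRR c + 1 else fPRR c

/-- The successor rule `Υ₂` of Theorem 4.3. -/
noncomputable def Ups2Rule {n : ℕ} (k : ℕ) (c : Fin n → F2) : F2 :=
  if (get c (n - 1) = 1 ∧ IsCoNecklace (yState c)) ∨
     (get c (n - 1) = 0 ∧ IsNecklace (Theta^[k] (wState c)))
  then fPRR c + 1 else fPRR c

/-- `x_c` of Theorem 4.1: `(0,c_1,…,c_{n-1})` if `c_{n-1}=0`,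
and `(c̄_1,…,c̄_{n-2},0,c_1)` if `c_{n-1}=1`. -/
noncomputable def xState {n : ℕ} (c : Fin n → F2) : Fin n → F2 :=
  if get c (n - 1) = 0 then (fun i => if (i : ℕ) = 0 then 0 else c i)
  else fun i => if (i : ℕ) < n - 2 then get c ((i : ℕ) + 1) + 1
       else if (i : ℕ) = n - 2 then 0 else get c 1

section LexAux

variable {m : ℕ}

lemma f2_val_inj {a b : F2} (h : a.val = b.val) : a = b := by
  have H : ∀ a b : F2, a.val = b.val → a = b := by decide
  exact H a b h

lemma f2_cases (a : F2) : a = 0 ∨ a = 1 := by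
  have H : ∀ a : F2, a = 0 ∨ a = 1 := by decide
  exact H a

lemma lexLe_refl (v : Fin m → F2) : lexLe v v := fun _ _ => le_rfl

lemma lexLe_of_diff {v w : Fin m → F2} (j : Fin m)
    (hag : ∀ i, i < j → v i = w i) (hv : v j = 0) (hw : w j = 1) : lexLe v w := by
  intro j' hag'
  rcases lt_trichotomy j' j with hlt | heq | hgt
  · rw [hag j' hlt]
  · subst heq; rw [hv, hw]; decide
  · have hvj := hag' j hgt
    rw [hv] at hvj; rw [hw] at hvj
    exact absurd hvj (by decide)

lemma exists_least_diff {v w : Fin m → F2} (hne : v ≠ w) :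
    ∃ j : Fin m, (∀ i, i < j → v i = w i) ∧ v j ≠ w j := by
  classical
  have hD : (Finset.univ.filter (fun j : Fin m => v j ≠ w j)).Nonempty := by
    by_contra hc
    apply hne; funext i
    by_contra hi
    exact hc ⟨i, by simp [hi]⟩
  refine ⟨Finset.min' _ hD, ?_, ?_⟩
  · intro i hi
    by_contra hne'
    have hle : Finset.min' _ hD ≤ i := Finset.min'_le _ i (by simp [hne'])
    exact absurd hi (not_lt.2 hle)
  · have := Finset.min'_mem _ hD
    simpa using this

lemma lexLe_strict {v w : Fin m → F2} (hle : lexLe v w) (hne : v ≠ w) :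
    ∃ j : Fin m, (∀ i, i < j → v i = w i) ∧ v j = 0 ∧ w j = 1 := by
  obtain ⟨j, hag, hj⟩ := exists_least_diff hne
  have hval := hle j hag
  rcases f2_cases (v j) with hv | hv <;> rcases f2_cases (w j) with hw | hw
  · exact absurd (hv.trans hw.symm) hj
  · exact ⟨j, hag, hv, hw⟩
  · rw [hv, hw] at hval; exact absurd hval (by decide)
  · exact absurd (hv.trans hw.symm) hj

lemma lexLe_trans {u v w : Fin m → F2} (h1 : lexLe u v) (h2 : lexLe v w) : lexLe u w := by
  by_cases huv : u = v
  · subst huv; exact h2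
  by_cases hvw : v = w
  · subst hvw; exact h1
  obtain ⟨j1, hag1, hu1, hv1⟩ := lexLe_strict h1 huv
  obtain ⟨j2, hag2, hv2, hw2⟩ := lexLe_strict h2 hvw
  rcases lt_trichotomy j1 j2 with hlt | heq | hgt
  · exact lexLe_of_diff j1 (fun i hi => (hag1 i hi).trans (hag2 i (hi.trans hlt)))
      hu1 (by rw [← hag2 j1 hlt]; exact hv1)
  · subst heq
    exact lexLe_of_diff j1 (fun i hi => (hag1 i hi).trans (hag2 i hi)) hu1 hw2
  · refine lexLe_of_diff j2 (fun i hi => (hag1 i (hi.trans hgt)).trans (hag2 i hi)) ?_ hw2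
    rw [hag1 j2 hgt]; exact hv2
  
lemma lexLe_antisymm {v w : Fin m → F2} (h1 : lexLe v w) (h2 : lexLe w v) : v = w := by
  by_contra hne
  obtain ⟨j, hag, hj⟩ := exists_least_diff hne
  have a := h1 j hag
  have b := h2 j (fun i hi => (hag i hi).symm)
  exact hj (f2_val_inj (le_antisymm a b))

lemma lexLe_total' (v w : Fin m → F2) : lexLe v w ∨ lexLe w v := by
  by_cases hne : v = w
  · subst hne; exact Or.inl (lexLe_refl v)
  obtain ⟨j, hag, hj⟩ := exists_least_diff hne
  rcases f2_cases (v j) with hv | hv <;> rcases f2_cases (w j) with hw | hw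
  · exact absurd (hv.trans hw.symm) hj
  · exact Or.inl (lexLe_of_diff j hag hv hw)
  · exact Or.inr (lexLe_of_diff j (fun i hi => (hag i hi).symm) hw hv)
  · exact absurd (hv.trans hw.symm) hj

lemma exists_lex_min (S : Finset (Fin m → F2)) :
    S.Nonempty → ∃ w ∈ S, ∀ x ∈ S, lexLe w x := by
  classical
  induction S using Finset.induction_on with
  | empty => intro hS; simp at hS
  | @insert a S' ha ih =>
    intro _
    rcases S'.eq_empty_or_nonempty with rfl | hS'
    · refine ⟨a, by simp, ?_⟩
      intro x hx
      simp only [Finset.mem_insert, Finset.notMem_empty, or_false] at hx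
      subst hx; exact lexLe_refl _
    · obtain ⟨w, hwS, hwmin⟩ := ih hS'
      rcases lexLe_total' w a with hle | hle
      · refine ⟨w, Finset.mem_insert_of_mem hwS, ?_⟩
        intro x hx
        rcases Finset.mem_insert.1 hx with rfl | hx'
        · exact hle
        · exact hwmin x hx'
      · refine ⟨a, Finset.mem_insert_self a S', ?_⟩
        intro x hx
        rcases Finset.mem_insert.1 hx with rfl | hx'
        · exact lexLe_refl _
        · exact lexLe_trans hle (hwmin x hx')

end LexAux
section OrbitAux

lemma nextMap_apply_lt {n : ℕ} (ρ : (Fin n → F2) → F2) (c : Fin n → F2) (i : Fin n)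
    (h : (i : ℕ) + 1 < n) : nextMap ρ c i = c ⟨(i : ℕ) + 1, h⟩ := dif_pos h

lemma nextMap_apply_last {n : ℕ} (ρ : (Fin n → F2) → F2) (c : Fin n → F2) (i : Fin n)
    (h : ¬ ((i : ℕ) + 1 < n)) : nextMap ρ c i = ρ c := dif_neg h

lemma inOrbit_trans {α : Type*} {σ : α → α} {x y z : α}
    (h1 : inOrbit σ x y) (h2 : inOrbit σ y z) : inOrbit σ x z := by
  obtain ⟨k, hk⟩ := h1
  obtain ⟨l, hl⟩ := h2
  exact ⟨l + k, by rw [Function.iterate_add_apply, hk, hl]⟩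

lemma iterate_eq_pow_apply {α : Type*} (e : Equiv.Perm α) (k : ℕ) (z : α) :
    (⇑e)^[k] z = (e ^ k) z := by
  induction k generalizing z with
  | zero => simp
  | succ k ih =>
    rw [Function.iterate_succ_apply, pow_succ]
    simp only [Equiv.Perm.mul_apply]
    exact ih (e z)

lemma inOrbit_symm {α : Type*} [Fintype α] {σ : α → α} (hσ : Function.Bijective σ)
    {x y : α} (hxy : inOrbit σ x y) : inOrbit σ y x := by
  classical
  obtain ⟨k, hk⟩ := hxy
  set e : Equiv.Perm α := Equiv.ofBijective σ hσ with he
  have hcoe : ⇑e = σ := rfl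
  have hd : 0 < orderOf e := orderOf_pos e
  refine ⟨k * orderOf e - k, ?_⟩
  rw [← hk, ← Function.iterate_add_apply]
  have hsum : k * orderOf e - k + k = k * orderOf e := by
    have : k ≤ k * orderOf e := Nat.le_mul_of_pos_right k hd
    omega
  rw [hsum, ← hcoe, iterate_eq_pow_apply]
  rw [mul_comm, pow_mul, pow_orderOf_eq_one]
  simp

end OrbitAux

/-- if the cycle representative `v` of an orbit is nonzero, then its companion
state lies in a different orbit whose cycle representative is lexicographically smaller. -/
theorem companion_in_smaller_cycle (n : ℕ) (hn : 1 ≤ n)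
    (f : (Fin n → F2) → F2) (h : (Fin (n - 1) → F2) → F2)
    (hf : ∀ c, f c = get c 0 + h (stTail c))
    (v : Fin n → F2) (hv0 : v ≠ 0)
    (hvrep : isCycleRep (nextMap f) v) :
    orbit (nextMap f) (compSt v) ≠ orbit (nextMap f) v ∧
    ∃ w : Fin n → F2, w ∈ orbit (nextMap f) (compSt v) ∧
      isCycleRep (nextMap f) w ∧ lexLt w v := by
  classical
  set σ : (Fin n → F2) → (Fin n → F2) := nextMap f with hσdef
  -- injectivity / bijectivity of σ
  have hinj : Function.Injective σ := by
    intro c c' hcc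
    have htail : ∀ j : Fin n, 0 < (j : ℕ) → c j = c' j := by
      intro j hj
      have hj1 : (j : ℕ) - 1 + 1 < n := by have := j.isLt; omega
      have hcong := congrFun hcc (⟨(j : ℕ) - 1, by omega⟩ : Fin n)
      rw [hσdef, nextMap_apply_lt f c _ hj1, nextMap_apply_lt f c' _ hj1] at hcong
      have hfin : (⟨(j : ℕ) - 1 + 1, hj1⟩ : Fin n) = j := by
        apply Fin.ext; simp; omega
      rwa [hfin] at hcong
    have htails : stTail c = stTail c' := by
      funext i
      exact htail _ (by simp)
    have hlast : f c = f c' := by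
      have hnn : ¬ ((n : ℕ) - 1 + 1 < n) := by omega
      have hcong := congrFun hcc (⟨n - 1, by omega⟩ : Fin n)
      rwa [hσdef, nextMap_apply_last f c _ (by simpa using hnn),
        nextMap_apply_last f c' _ (by simpa using hnn)] at hcong
    have hget : get c 0 = get c' 0 := by
      have h1 := hf c
      have h2 := hf c'
      rw [h1, h2, htails] at hlast
      exact add_right_cancel hlast
    funext j
    rcases Nat.eq_zero_or_pos (j : ℕ) with hj | hj
    · have hfin : j = (⟨0, by omega⟩ : Fin n) := by apply Fin.ext; simpa using hj
      have : c ⟨0, by omega⟩ = c' ⟨0, by omega⟩ := by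
        have g1 : get c 0 = c ⟨0, by omega⟩ := dif_pos (by omega)
        have g2 : get c' 0 = c' ⟨0, by omega⟩ := dif_pos (by omega)
        rw [← g1, ← g2]; exact hget
      rw [hfin]; exact this
    · exact htail j hj
  have hbij : Function.Bijective σ := (Finite.injective_iff_bijective).1 hinj
  -- conjugate/companion commutation
  have hconj : ∀ c : Fin n → F2, σ (conjSt c) = compSt (σ c) := by
    intro c
    funext i
    by_cases hi : (i : ℕ) + 1 < n
    · rw [hσdef, nextMap_apply_lt f _ i hi]
      have h1 : conjSt c ⟨(i : ℕ) + 1, hi⟩ = c ⟨(i : ℕ) + 1, hi⟩ := by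
        simp [conjSt]
      rw [h1]
      have h2 : compSt (nextMap f c) i = nextMap f c i := by
        simp only [compSt, if_neg (by omega : ¬ ((i : ℕ) + 1 = n))]
      rw [h2, nextMap_apply_lt f c i hi]
    · rw [hσdef, nextMap_apply_last f _ i hi]
      have h2 : compSt (nextMap f c) i = nextMap f c i + 1 := by
        simp only [compSt, if_pos (by have := i.isLt; omega : (i : ℕ) + 1 = n)]
      rw [h2, nextMap_apply_last f c i hi]
      -- f (conjSt c) = f c + 1
      have htails : stTail (conjSt c) = stTail c := by
        funext k
        simp [stTail, conjSt]
      have hget : get (conjSt c) 0 = get c 0 + 1 := by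
        have g1 : get (conjSt c) 0 = conjSt c ⟨0, by omega⟩ := dif_pos (by omega)
        have g2 : get c 0 = c ⟨0, by omega⟩ := dif_pos (by omega)
        rw [g1, g2]
        simp [conjSt]
      rw [hf (conjSt c), hf c, htails, hget]
      ring
  -- the "prepend zero" state u
  set u : Fin n → F2 := fun i => if hz : (i : ℕ) = 0 then 0 else
    v ⟨(i : ℕ) - 1, by have := i.isLt; omega⟩ with hudef
  -- u is lexicographically strictly less than v
  have hulv : lexLt u v := by
    have hD : (Finset.univ.filter (fun j : Fin n => v j = 1)).Nonempty := by
      by_contra hc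
      apply hv0; funext i
      rcases f2_cases (v i) with h0 | h1
      · exact h0
      · exact absurd (⟨i, by simp [h1]⟩ : (Finset.univ.filter
          (fun j : Fin n => v j = 1)).Nonempty) hc
    set j0 : Fin n := Finset.min' _ hD with hj0
    have hvj0 : v j0 = 1 := by
      have := Finset.min'_mem _ hD; simpa [hj0] using this
    have hzero : ∀ i : Fin n, i < j0 → v i = 0 := by
      intro i hi
      rcases f2_cases (v i) with h0 | h1
      · exact h0
      · have : j0 ≤ i := Finset.min'_le _ i (by simp [h1])
        exact absurd hi (not_lt.2 this)
    have huj0 : u j0 = 0 := by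
      rcases Nat.eq_zero_or_pos (j0 : ℕ) with hz | hz
      · rw [hudef]; simp [hz]
      · rw [hudef]
        simp only [dif_neg (by omega : ¬ ((j0 : ℕ) = 0))]
        exact hzero _ (by simp [Fin.lt_def]; omega)
    have hag : ∀ i : Fin n, i < j0 → u i = v i := by
      intro i hi
      rw [hzero i hi]
      rcases Nat.eq_zero_or_pos (i : ℕ) with hz | hz
      · rw [hudef]; simp [hz]
      · rw [hudef]
        simp only [dif_neg (by omega : ¬ ((i : ℕ) = 0))]
        refine hzero _ ?_
        simp only [Fin.lt_def] at hi ⊢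
        omega
    constructor
    · exact lexLe_of_diff j0 hag huj0 hvj0
    · intro hequ
      rw [hequ] at huj0
      rw [huj0] at hvj0
      exact absurd hvj0 (by decide)
  -- predecessor of v
  obtain ⟨c, hc⟩ := hbij.2 v
  have hcv : ∀ j : Fin n, 0 < (j : ℕ) → c j = v ⟨(j : ℕ) - 1, by have := j.isLt; omega⟩ := by
    intro j hj
    have hj1 : (j : ℕ) - 1 + 1 < n := by have := j.isLt; omega
    have hcong := congrFun hc (⟨(j : ℕ) - 1, by omega⟩ : Fin n)
    rw [hσdef, nextMap_apply_lt f c _ hj1] at hcong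
    have hfin : (⟨(j : ℕ) - 1 + 1, hj1⟩ : Fin n) = j := by
      apply Fin.ext; simp; omega
    rw [hfin] at hcong
    exact hcong
  have hcorb : c ∈ orbit σ v := inOrbit_symm hbij ⟨1, by simpa using hc⟩
  -- c 0 = 1
  have hc0 : c ⟨0, by omega⟩ = 1 := by
    rcases f2_cases (c ⟨0, by omega⟩) with h0 | h1
    · exfalso
      have hcu : c = u := by
        funext j
        rcases Nat.eq_zero_or_pos (j : ℕ) with hz | hz
        · have hfin : j = (⟨0, by omega⟩ : Fin n) := by apply Fin.ext; simpa using hz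
          rw [hfin, h0, hudef]; simp
        · rw [hcv j hz, hudef]
          simp only [dif_neg (by omega : ¬ ((j : ℕ) = 0))]
      have hle := hvrep c hcorb
      rw [hcu] at hle
      exact hulv.2 (lexLe_antisymm hulv.1 hle)
    · exact h1
  -- conjSt c = u
  have hconjc : conjSt c = u := by
    funext j
    rcases Nat.eq_zero_or_pos (j : ℕ) with hz | hz
    · have hfin : j = (⟨0, by omega⟩ : Fin n) := by apply Fin.ext; simpa using hz
      rw [hfin]
      have l1 : conjSt c ⟨0, by omega⟩ = 0 := by
        simp only [conjSt, if_pos (rfl : ((⟨0, by omega⟩ : Fin n) : ℕ) = 0)]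
        rw [hc0]
        decide
      have l2 : u ⟨0, by omega⟩ = 0 := by
        rw [hudef]
        simp
      rw [l1, l2]
    · simp only [conjSt, hudef, if_neg (by omega : ¬ ((j : ℕ) = 0)),
        dif_neg (by omega : ¬ ((j : ℕ) = 0))]
      exact hcv j hz
  -- σ u = compSt v
  have hsu : σ u = compSt v := by
    rw [← hconjc, hconj c, hc]
  have huorb : u ∈ orbit σ (compSt v) :=
    inOrbit_symm hbij ⟨1, by simpa using hsu⟩
  -- distinctness of orbits
  have hneq : orbit σ (compSt v) ≠ orbit σ v := by
    intro heq
    have : u ∈ orbit σ v := heq ▸ huorb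
    have hle := hvrep u this
    exact hulv.2 (lexLe_antisymm hulv.1 hle)
  refine ⟨hneq, ?_⟩
  -- minimum of the orbit of compSt v
  have hfin : (orbit σ (compSt v)).Finite := Set.toFinite _
  set S : Finset (Fin n → F2) := hfin.toFinset with hS
  have hSne : S.Nonempty := ⟨compSt v, by
    rw [hS, Set.Finite.mem_toFinset]; exact ⟨0, rfl⟩⟩
  obtain ⟨w, hwS, hwmin⟩ := exists_lex_min S hSne
  have hworb : w ∈ orbit σ (compSt v) := by
    rwa [hS, Set.Finite.mem_toFinset] at hwS
  refine ⟨w, hworb, ?_, ?_⟩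
  · intro x hx
    have hxorb : x ∈ orbit σ (compSt v) := inOrbit_trans hworb hx
    exact hwmin x (by rw [hS, Set.Finite.mem_toFinset]; exact hxorb)
  · have hwu : lexLe w u := hwmin u (by rw [hS, Set.Finite.mem_toFinset]; exact huorb)
    refine ⟨lexLe_trans hwu hulv.1, ?_⟩
    intro hwv
    rw [hwv] at hwu
    exact hulv.2 (lexLe_antisymm hulv.1 hwu)
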